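/- arXiv:0906.3413 — 2 statements merged into one kernel-verified Lean document; each statement's English description precedes it below -/
import Mathlib

section
/- Let p > 3 be prime and j a positive integer with j not congruent to 0 mod (p-1). Then for any positive integers m, r, the sum S_j(mp^r) = Σ_{1 ≤ i ≤ mp^r, p ∤ i} 1/i^j, viewed as a p-adic number (or p-integral rational), satisfies S_j(mp^r) ≡ 0 (mod p^r). -/
/-!
The sum lies in `ℤ_[p]`, and its image in `ZMod (p ^ r)` is `m • ∑ u, u⁻¹ ^ j` over the
units `u`, since `1, …, m p ^ r` run `m` times through the residues. Multiplication by a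
unit `c` lifting a primitive root mod `p` permutes the units, so `(1 - c ^ j) * ∑ u, u ^ j = 0`;
and `1 - c ^ j` is a unit because its reduction mod `p` is nonzero when `p - 1 ∤ j`.
-/

open Finset
open scoped Ring

theorem map_ringInverse {M N F : Type*} [MonoidWithZero M] [MonoidWithZero N] [FunLike F M N]
    [MonoidHomClass F M N] (f : F) {a : M} (ha : IsUnit a) : f a⁻¹ʳ = (f a)⁻¹ʳ := by
  obtain ⟨u, rfl⟩ := ha
  simpa using (Ring.inverse_unit (Units.map (f : M →* N) u)).symm

theorem sum_units_pow_eq_zero {R : Type*} [CommRing R] [Fintype Rˣ] {j : ℕ} (c : Rˣ)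
    (hc : IsUnit (1 - (c : R) ^ j)) : ∑ u : Rˣ, (u : R) ^ j = 0 := by
  have hfix : (c : R) ^ j * ∑ u : Rˣ, (u : R) ^ j = ∑ u : Rˣ, (u : R) ^ j := by
    rw [mul_sum]
    exact Fintype.sum_equiv (Equiv.mulLeft c) _ _ fun u => by simp [mul_pow]
  exact hc.mul_right_eq_zero.mp (by rw [sub_mul, one_mul, hfix, sub_self])

theorem sum_ringInverse_pow_eq_sum_units {M : Type*} [Semiring M] [Fintype M] [Fintype Mˣ]
    {j : ℕ} (hj : j ≠ 0) : ∑ z : M, z⁻¹ʳ ^ j = ∑ u : Mˣ, (u : M) ^ j := by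
  calc ∑ z : M, z⁻¹ʳ ^ j = ∑ u : Mˣ, (u : M)⁻¹ʳ ^ j :=
        (Fintype.sum_of_injective _ Units.val_injective _ _
          (fun z hz => by
            rw [Ring.inverse_non_unit z fun ⟨u, hu⟩ => hz ⟨u, hu⟩, zero_pow hj])
          fun _ => rfl).symm
    _ = ∑ u : Mˣ, ((u⁻¹ : Mˣ) : M) ^ j := by simp only [Ring.inverse_unit]
    _ = ∑ u : Mˣ, (u : M) ^ j := Equiv.sum_comp (Equiv.inv Mˣ) fun u => (u : M) ^ j

namespace ZMod

theorem isUnit_castHom_pow_iff {n r : ℕ} [NeZero n] (hr : r ≠ 0) (z : ZMod (n ^ r)) :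
    IsUnit (castHom (dvd_pow_self n hr) (ZMod n) z) ↔ IsUnit z := by
  rw [← natCast_zmod_val z, map_natCast, isUnit_iff_coprime, isUnit_iff_coprime,
    Nat.coprime_pow_right_iff (Nat.pos_of_ne_zero hr)]

theorem exists_unit_isUnit_one_sub_pow {p r j : ℕ} [Fact p.Prime] (hr : r ≠ 0)
    (hj : ¬ (p - 1) ∣ j) : ∃ c : (ZMod (p ^ r))ˣ, IsUnit (1 - (c : ZMod (p ^ r)) ^ j) := by
  obtain ⟨g, hg⟩ := IsCyclic.exists_ofOrder_eq_natCard (α := (ZMod p)ˣ)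
  rw [Nat.card_eq_fintype_card, card_units] at hg
  obtain ⟨c, rfl⟩ := unitsMap_surjective (dvd_pow_self p hr) g
  refine ⟨c, (isUnit_castHom_pow_iff hr _).mp ?_⟩
  rw [isUnit_iff_ne_zero, map_sub, map_one, map_pow, sub_ne_zero, ne_comm]
  intro hpow
  exact hj (hg ▸ orderOf_dvd_of_pow_eq_one (Units.ext (by simpa [unitsMap_val] using hpow)))

variable {M : Type*} [AddCommMonoid M] (n : ℕ) [NeZero n]

theorem sum_range_natCast (g : ZMod n → M) : ∑ i ∈ range n, g i = ∑ z, g z :=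
  sum_nbij' (↑) val (fun _ _ => mem_univ _) (fun z _ => mem_range.mpr z.val_lt)
    (fun _ hi => val_cast_of_lt (mem_range.mp hi)) (fun z _ => natCast_zmod_val z)
    fun _ _ => rfl

theorem sum_range_mul_natCast (m : ℕ) (g : ZMod n → M) :
    ∑ i ∈ range (m * n), g i = m • ∑ z, g z := by
  induction m with
  | zero => simp
  | succ m ih => simp [add_mul, sum_range_add, ih, succ_nsmul, sum_range_natCast]

theorem sum_Icc_mul_natCast (m : ℕ) (g : ZMod n → M) :
    ∑ i ∈ Icc 1 (m * n), g i = m • ∑ z, g z := by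
  rw [← Ico_add_one_right_eq_Icc, ← zero_add 1, ← sum_Ico_add' (fun i : ℕ => g i),
    ← range_eq_Ico]
  push_cast
  rw [sum_range_mul_natCast n m fun z => g (z + 1)]
  exact congrArg (m • ·) (Equiv.sum_comp (Equiv.addRight 1) g)

end ZMod

namespace PadicInt

variable {p : ℕ} [hp : Fact p.Prime]

theorem isUnit_natCast_iff {i : ℕ} : IsUnit (i : ℤ_[p]) ↔ ¬ p ∣ i := by
  rw [isUnit_iff, norm_natCast_eq_one_iff, hp.out.coprime_iff_not_dvd]

theorem coe_ringInverse {x : ℤ_[p]} (hx : IsUnit x) :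
    ((x⁻¹ʳ : ℤ_[p]) : ℚ_[p]) = (x : ℚ_[p])⁻¹ :=
  (map_ringInverse Coe.ringHom hx).trans (Ring.inverse_eq_inv _)

end PadicInt

theorem padicNorm_le_of_toZModPow_eq_zero {p : ℕ} [Fact p.Prime] {q : ℚ} {x : ℤ_[p]} {r : ℕ}
    (hx : (x : ℚ_[p]) = q) (h : PadicInt.toZModPow r x = 0) :
    padicNorm p q ≤ (p : ℚ) ^ (-(r : ℤ)) := by
  have hx' : ‖x‖ ≤ (p : ℝ) ^ (-(r : ℤ)) := by
    rwa [PadicInt.norm_le_pow_iff_mem_span_pow, ← PadicInt.ker_toZModPow, RingHom.mem_ker]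
  rw [PadicInt.norm_def, hx, Padic.eq_padicNorm, ← Rat.cast_natCast, ← Rat.cast_zpow] at hx'
  exact_mod_cast hx'

theorem S_j_padic_congruence_general (p : ℕ) (hp : p.Prime)
    (j m r : ℕ) (hjmod : ¬ (p - 1) ∣ j) :
    padicNorm p (∑ i ∈ (Finset.Icc 1 (m * p ^ r)).filter (fun i => ¬ p ∣ i),
        (1 : ℚ) / (i : ℚ) ^ j) ≤ (p : ℚ) ^ (-(r : ℤ)) := by
  have := Fact.mk hp
  have hj : j ≠ 0 := by rintro rfl; exact hjmod (dvd_zero _)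
  set T := (Icc 1 (m * p ^ r)).filter (fun i => ¬ p ∣ i)
  have hunit : ∀ i ∈ T, IsUnit (i : ℤ_[p]) := fun i hi =>
    PadicInt.isUnit_natCast_iff.mpr (mem_filter.mp hi).2
  refine padicNorm_le_of_toZModPow_eq_zero (x := ∑ i ∈ T, (i : ℤ_[p])⁻¹ʳ ^ j) ?_ ?_
  · rw [PadicInt.coe_sum, Rat.cast_sum]
    exact sum_congr rfl fun i hi => by simp [PadicInt.coe_ringInverse (hunit i hi)]
  rcases r.eq_zero_or_pos with rfl | hr
  · exact Subsingleton.elim (α := ZMod 1) _ _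
  obtain ⟨c, hc⟩ := ZMod.exists_unit_isUnit_one_sub_pow hr.ne' hjmod
  calc PadicInt.toZModPow r (∑ i ∈ T, (i : ℤ_[p])⁻¹ʳ ^ j)
      = ∑ i ∈ T, (i : ZMod (p ^ r))⁻¹ʳ ^ j := by
        rw [map_sum]
        exact sum_congr rfl fun i hi => by rw [map_pow, map_ringInverse _ (hunit i hi), map_natCast]
    _ = ∑ i ∈ Icc 1 (m * p ^ r), (i : ZMod (p ^ r))⁻¹ʳ ^ j := by
        refine sum_filter_of_ne fun i _ hi hdvd => hi ?_
        rw [Ring.inverse_non_unit _ ((ZMod.isUnit_natCast_iff_not_dvd_pow hp hr).not_left.mpr hdvd),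
          zero_pow hj]
    _ = m • ∑ u : (ZMod (p ^ r))ˣ, (u : ZMod (p ^ r)) ^ j := by
        rw [ZMod.sum_Icc_mul_natCast _ _ fun z => z⁻¹ʳ ^ j, sum_ringInverse_pow_eq_sum_units hj]
    _ = 0 := by rw [sum_units_pow_eq_zero c hc, smul_zero]

theorem S_j_padic_congruence (p : ℕ) (hp : p.Prime) (hp3 : 3 < p)
    (j m r : ℕ) (hj : 1 ≤ j) (hjmod : ¬ (p - 1) ∣ j) (hm : 1 ≤ m) (hr : 1 ≤ r) :
    padicNorm p (∑ i ∈ (Finset.Icc 1 (m * p ^ r)).filter (fun i => ¬ p ∣ i),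
        (1 : ℚ) / (i : ℚ) ^ j) ≤ (p : ℚ) ^ (-(r : ℤ)) :=
  S_j_padic_congruence_general p hp j m r hjmod
end

section
/- Let p > 3 be prime, B ≥ 1 natural, and m, n, r, s positive integers with s ≤ r and np^s ≤ mp^r. Then binom(mp^r, np^s)^2 · binom(2np^s, np^s)^B ≡ binom(mp^{r-1}, np^{s-1})^2 · binom(2np^{s-1}, np^{s-1})^B (mod p^{2r}). -/
/-!
For `q` coprime to `6` let `P(X) = ∏ (X + i)`, the product over the residues `0 ≤ i < q`
coprime to `q`. Multiplying the units of `ℤ/q` by `2` permutes them, so `P(2X) ≡ P(X)` mod `q`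
and `q` divides the coefficient of `X²`; the residues are stable under `i ↦ q - i` and `φ(q)` is
even, so `P(-X) = P(X - q)`, which forces `q²` to divide the coefficient of `X`. Hence every
block `∏ (aq + i) = P(aq)` is `≡ P(0)` mod `q³`.

Taking `q = p^(k+1)` and splitting `(pM)!` into the multiples of `p` and the rest, this gives
Jacobsthal's congruence `C(pN, pK) ≡ C(N, K)` mod `p^(3(k+1) + v_p C(N, K))` whenever `p^k`
divides `N` and `K`. Apply it to `N = m p^(r-1)`, `K = n p^(s-1)` with `k = min(v_p N, v_p K)`,
and to `(2K, K)` with `k = v_p K`. Since `v_p N ≤ v_p C(N, K) + v_p K`, both terms of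
`X² Y^B - X'² Y'^B = (X - X')(X + X') Y^B + X'² (Y^B - Y'^B)` are divisible by `p^(2r)`.
-/

open Polynomial Finset

theorem pow_dvd_sq_mul_pow_sub_sq_mul_pow {R : Type*} [CommRing R] {a x y z w : R} {e f t n : ℕ}
    (B : ℕ) (hxy : a ^ e ∣ x - y) (hy : a ^ t ∣ y) (hzw : a ^ f ∣ z - w) (hte : t ≤ e)
    (hn₁ : n ≤ e + t) (hn₂ : n ≤ 2 * t + f) :
    a ^ n ∣ x ^ 2 * z ^ B - y ^ 2 * w ^ B := by
  have hx : a ^ t ∣ x := by simpa using dvd_add ((pow_dvd_pow a hte).trans hxy) hy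
  have h₁ : a ^ (e + t) ∣ (x - y) * (x + y) * z ^ B :=
    (pow_add a e t ▸ mul_dvd_mul hxy (dvd_add hx hy)).mul_right _
  have h₂ : a ^ (2 * t + f) ∣ y ^ 2 * (z ^ B - w ^ B) := by
    rw [pow_add, pow_mul']
    exact mul_dvd_mul (pow_dvd_pow_of_dvd hy 2) (hzw.trans (sub_dvd_pow_sub_pow z w B))
  rw [show x ^ 2 * z ^ B - y ^ 2 * w ^ B =
    (x - y) * (x + y) * z ^ B + y ^ 2 * (z ^ B - w ^ B) by ring]
  exact dvd_add ((pow_dvd_pow a hn₁).trans h₁) ((pow_dvd_pow a hn₂).trans h₂)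

namespace Polynomial

theorem pow_dvd_eval_sub_sum_range {R : Type*} [CommRing R] (f : R[X]) (c : R) (n : ℕ) :
    c ^ n ∣ f.eval c - ∑ i ∈ range n, f.coeff i * c ^ i := by
  induction n generalizing f with
  | zero => simp
  | succ n ih =>
    have hf : f.eval c = f.divX.eval c * c + f.coeff 0 := by
      conv_lhs => rw [← divX_mul_X_add f]
      simp
    convert mul_dvd_mul_right (ih f.divX) c using 1
    · ring
    · simp only [hf, sum_range_succ', coeff_divX, pow_succ, sub_mul, sum_mul]
      ring_nf

theorem prod_units_X_add_C_comp_C_mul_X {A : Type*} [CommRing A] [Fintype Aˣ] (w : Aˣ) :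
    (∏ u : Aˣ, (X + C (u : A))).comp (C (w : A) * X) = ∏ u : Aˣ, (X + C (u : A)) := by
  calc (∏ u : Aˣ, (X + C (u : A))).comp (C (w : A) * X)
      = ∏ u : Aˣ, (C (w : A) * X + C ((w * u : Aˣ) : A)) := by
        simp only [prod_comp, add_comp, X_comp, C_comp]
        exact (Equiv.prod_comp (Equiv.mulLeft w) fun u => C (w : A) * X + C (u : A)).symm
    _ = C ((w ^ Fintype.card Aˣ : Aˣ) : A) * ∏ u : Aˣ, (X + C (u : A)) := by
        simp only [Units.val_mul, C_mul, ← mul_add, prod_mul_distrib, prod_const,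
          Units.val_pow_eq_pow_val, C_pow, card_univ]
    _ = ∏ u : Aˣ, (X + C (u : A)) := by simp [pow_card_eq_one]

end Polynomial

namespace Nat

theorem two_lt_of_coprime_six {q : ℕ} (hq : q.Coprime 6) (hq1 : q ≠ 1) : 2 < q := by
  have : q ≠ 0 := by rintro rfl; norm_num at hq
  have : q ≠ 2 := by rintro rfl; norm_num at hq
  omega

def coprimeResidues (q : ℕ) : Finset ℕ := {i ∈ range q | q.Coprime i}

theorem pos_of_mem_coprimeResidues {q i : ℕ} (hq : q ≠ 1) (hi : i ∈ coprimeResidues q) :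
    0 < i := by
  refine pos_of_ne_zero ?_
  rintro rfl
  exact hq ((coprime_zero_right q).1 (mem_filter.1 hi).2)

theorem prod_coprimeResidues_eq_prod_units {q : ℕ} [NeZero q] {M : Type*} [CommMonoid M]
    (f : ZMod q → M) : ∏ i ∈ coprimeResidues q, f i = ∏ u : (ZMod q)ˣ, f u := by
  refine prod_bij' (fun i hi => ZMod.unitOfCoprime i (mem_filter.1 hi).2.symm)
    (fun u _ => (u : ZMod q).val) (fun _ _ => mem_univ _) (fun u _ => ?_) (fun i hi => ?_)
    (fun u _ => ?_) (fun _ _ => rfl)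
  · simpa [coprimeResidues, ZMod.val_lt] using (ZMod.val_coe_unit_coprime u).symm
  · simp [ZMod.val_cast_of_lt (mem_range.1 (mem_filter.1 hi).1)]
  · ext; simp

noncomputable def coprimeResiduesPoly (q : ℕ) : ℤ[X] :=
  ∏ i ∈ coprimeResidues q, (X + C (i : ℤ))

theorem coprimeResiduesPoly_comp_neg_X {q : ℕ} (hq : 2 < q) :
    (coprimeResiduesPoly q).comp (-X) = (coprimeResiduesPoly q).comp (X - C (q : ℤ)) := by
  have hmem : ∀ i ∈ coprimeResidues q, q - i ∈ coprimeResidues q := fun i hi => by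
    have := pos_of_mem_coprimeResidues (by omega) hi
    simp only [coprimeResidues, mem_filter, mem_range] at hi ⊢
    exact ⟨by omega, (coprime_self_sub_right hi.1.le).2 hi.2⟩
  have hreflect : ∏ i ∈ coprimeResidues q, (X - C (q : ℤ) + C (i : ℤ)) =
      ∏ i ∈ coprimeResidues q, (X - C (i : ℤ)) := by
    refine prod_nbij' (q - ·) (q - ·) hmem hmem (fun i hi => ?_) (fun i hi => ?_)
      (fun i hi => ?_)
    all_goals have := mem_range.1 (mem_filter.1 hi).1
    · omega
    · omega
    · simp only [Nat.cast_sub this.le, C_sub]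
      ring
  have heven : Even #(coprimeResidues q) := totient_even hq
  simp only [coprimeResiduesPoly, Polynomial.prod_comp, add_comp, X_comp, C_comp, hreflect]
  rw [← one_mul (∏ i ∈ _, (X - _)), ← heven.neg_one_pow, ← prod_const, ← prod_mul_distrib]
  exact prod_congr rfl fun _ _ => by ring

theorem intCast_dvd_coeff_two_coprimeResiduesPoly {q : ℕ} (hq : q.Coprime 6) :
    (q : ℤ) ∣ (coprimeResiduesPoly q).coeff 2 := by
  have : NeZero q := ⟨by rintro rfl; norm_num at hq⟩
  set P := (coprimeResiduesPoly q).map (Int.castRingHom (ZMod q))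
  have hP : P = ∏ u : (ZMod q)ˣ, (X + C (u : ZMod q)) := by
    simp only [P, coprimeResiduesPoly, Polynomial.map_prod, Polynomial.map_add, Polynomial.map_X,
      Polynomial.map_C, Int.coe_castRingHom, Int.cast_natCast]
    exact prod_coprimeResidues_eq_prod_units (M := (ZMod q)[X]) fun z => X + C z
  have h2 := congrArg (coeff · 2) (prod_units_X_add_C_comp_C_mul_X
    (ZMod.unitOfCoprime 2 (hq.coprime_dvd_right (by norm_num)).symm))
  simp only [comp_C_mul_X_coeff, ← hP, ZMod.coe_unitOfCoprime] at h2
  have h3 : IsUnit ((3 : ℕ) : ZMod q) :=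
    (ZMod.isUnit_iff_coprime 3 q).2 (hq.coprime_dvd_right (by norm_num)).symm
  rw [← ZMod.intCast_zmod_eq_zero_iff_dvd, ← eq_intCast (Int.castRingHom (ZMod q)), ← coeff_map]
  refine h3.mul_right_eq_zero.1 ?_
  push_cast at h2 ⊢
  linear_combination h2

theorem sq_dvd_coeff_one_coprimeResiduesPoly {q : ℕ} (hq : q.Coprime 6) :
    (q : ℤ) ^ 2 ∣ (coprimeResiduesPoly q).coeff 1 := by
  obtain rfl | hq1 := eq_or_ne q 1
  · simp
  have hq2 := two_lt_of_coprime_six hq hq1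
  have hsymm := congrArg (coeff · 1) (coprimeResiduesPoly_comp_neg_X hq2)
  rw [← neg_one_mul (X : ℤ[X]), ← C_1, ← C_neg, comp_C_mul_X_coeff, sub_eq_add_neg, ← C_neg,
    ← taylor_apply, taylor_coeff_one] at hsymm
  obtain ⟨z, hz⟩ := pow_dvd_eval_sub_sum_range (derivative (coprimeResiduesPoly q)) (-q) 2
  obtain ⟨y, hy⟩ := intCast_dvd_coeff_two_coprimeResiduesPoly hq
  norm_num [sum_range_succ, coeff_derivative] at hz hsymm
  have h2 : (q : ℤ) ^ 2 ∣ 2 * (coprimeResiduesPoly q).coeff 1 :=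
    ⟨2 * y - z, by linear_combination -hz - hsymm + 2 * q * hy⟩
  have hcop : IsCoprime ((q : ℤ) ^ 2) 2 := by
    exact_mod_cast
      (Nat.isCoprime_iff_coprime.2 (hq.coprime_dvd_right (by norm_num : 2 ∣ 6))).pow_left
  exact hcop.dvd_of_dvd_mul_left h2

theorem prod_coprimeResidues_mul_add_modEq {q : ℕ} (hq : q.Coprime 6) (a : ℕ) :
    ∏ i ∈ coprimeResidues q, (a * q + i) ≡ ∏ i ∈ coprimeResidues q, i [MOD q ^ 3] := by
  set P := coprimeResiduesPoly q
  have heval : ∀ c : ℤ, P.eval c = ∏ i ∈ coprimeResidues q, (c + i) := by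
    simp [P, coprimeResiduesPoly, eval_prod]
  obtain ⟨x, hx⟩ := pow_dvd_eval_sub_sum_range P (a * q) 3
  obtain ⟨y₁, hy₁⟩ := sq_dvd_coeff_one_coprimeResiduesPoly hq
  obtain ⟨y₂, hy₂⟩ := intCast_dvd_coeff_two_coprimeResiduesPoly hq
  simp only [sum_range_succ, sum_range_zero, coeff_zero_eq_eval_zero, heval, zero_add] at hx
  rw [Nat.modEq_iff_dvd]
  push_cast
  exact ⟨-(a ^ 3 * x + a * y₁ + a ^ 2 * y₂),
    by linear_combination -hx - a * q * hy₁ - a ^ 2 * q ^ 2 * hy₂⟩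

def coprimeFactorial (q N : ℕ) : ℕ := ∏ i ∈ Ioc 0 N with q.Coprime i, i

theorem coprime_coprimeFactorial (q N : ℕ) : q.Coprime (coprimeFactorial q N) :=
  Coprime.prod_right fun _ hi => (mem_filter.1 hi).2

theorem coprimeFactorial_pow (p N : ℕ) {k : ℕ} (hk : k ≠ 0) :
    coprimeFactorial (p ^ k) N = coprimeFactorial p N := by
  simp only [coprimeFactorial, coprime_pow_left_iff (pos_of_ne_zero hk)]

theorem factorial_eq_coprimeFactorial_mul {p : ℕ} (hp : p.Prime) (N : ℕ) :
    N ! = coprimeFactorial p N * p ^ (N / p) * (N / p)! := by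
  induction N with
  | zero => simp [coprimeFactorial]
  | succ N ih =>
    have hF : coprimeFactorial p (N + 1) =
        coprimeFactorial p N * if p.Coprime (N + 1) then N + 1 else 1 := by
      simp only [coprimeFactorial, prod_filter, prod_Ioc_succ_top N.zero_le]
    rw [factorial_succ, ih, hF]
    by_cases h : p ∣ N + 1
    · obtain ⟨c, hc⟩ := h
      have hdiv : N / p + 1 = c := by
        rw [← succ_div_of_dvd ⟨c, hc⟩, hc, Nat.mul_div_cancel_left _ hp.pos]
      rw [if_neg fun hcop => hp.one_lt.ne' (hcop.eq_one_of_dvd ⟨c, hc⟩), succ_div_of_dvd ⟨c, hc⟩,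
        hc, ← hdiv, pow_succ, factorial_succ]
      ring
    · rw [if_pos ((hp.coprime_iff_not_dvd).2 h), succ_div_of_not_dvd h]
      ring

theorem choose_mul_coprimeFactorial {p : ℕ} (hp : p.Prime) (K L : ℕ) :
    (p * (K + L)).choose (p * K) * (coprimeFactorial p (p * K) * coprimeFactorial p (p * L)) =
      (K + L).choose K * coprimeFactorial p (p * (K + L)) := by
  have hdec (M : ℕ) : (p * M)! = coprimeFactorial p (p * M) * p ^ M * M ! := by
    simpa only [Nat.mul_div_cancel_left _ hp.pos] using
      factorial_eq_coprimeFactorial_mul hp (p * M)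
  have hbig := choose_mul_factorial_mul_factorial (Nat.mul_le_mul_left p (le_add_right K L))
  have hsmall := choose_mul_factorial_mul_factorial (le_add_right K L)
  rw [← Nat.mul_sub, Nat.add_sub_cancel_left] at hbig
  rw [Nat.add_sub_cancel_left] at hsmall
  rw [hdec, hdec, hdec, ← hsmall, pow_add] at hbig
  have hpos : 0 < p ^ K * p ^ L * K ! * L ! := by have := hp.pos; positivity
  refine Nat.eq_of_mul_eq_mul_right hpos ?_
  linarith [hbig]

theorem coprimeFactorial_mul_add_self {q : ℕ} (hq : 1 < q) (a : ℕ) :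
    coprimeFactorial q (a * q + q) =
      coprimeFactorial q (a * q) * ∏ i ∈ coprimeResidues q, (a * q + i) := by
  have hblock : ∏ i ∈ Ioc (a * q) (a * q + q) with q.Coprime i, i =
      ∏ i ∈ coprimeResidues q, (a * q + i) := by
    have hcop (i : ℕ) : q.Coprime (a * q + i) ↔ q.Coprime i := coprime_mul_right_add_right q i a
    refine prod_nbij' (· - a * q) (a * q + ·) (fun i hi => ?_) (fun i hi => ?_)
      (fun i hi => ?_) (fun i _ => by simp) (fun i hi => ?_)
    · simp only [mem_filter, mem_Ioc] at hi
      obtain ⟨⟨hlt, hle⟩, hi⟩ := hi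
      obtain ⟨j, rfl⟩ := exists_add_of_le hlt.le
      rw [hcop] at hi
      simp only [coprimeResidues, mem_filter, mem_range, Nat.add_sub_cancel_left]
      refine ⟨lt_of_le_of_ne (by omega) ?_, hi⟩
      rintro rfl
      exact hq.ne' (hi.eq_one_of_dvd dvd_rfl)
    · have := pos_of_mem_coprimeResidues hq.ne' hi
      simp only [coprimeResidues, mem_filter, mem_range] at hi
      simp only [mem_filter, mem_Ioc, hcop]
      exact ⟨⟨by omega, by omega⟩, hi.2⟩
    all_goals simp only [mem_filter, mem_Ioc] at hi; omega
  simp only [coprimeFactorial, ← hblock, prod_filter]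
  exact (prod_Ioc_consecutive _ (zero_le _) (le_add_right _ _)).symm

theorem coprimeFactorial_mul_modEq {q : ℕ} (hq : q.Coprime 6) (a : ℕ) :
    coprimeFactorial q (a * q) ≡ (∏ i ∈ coprimeResidues q, i) ^ a [MOD q ^ 3] := by
  obtain rfl | hq1 := eq_or_ne q 1
  · exact modEq_one
  have hq1 : 1 < q := (two_lt_of_coprime_six hq hq1).trans' one_lt_two
  induction a with
  | zero => simpa [coprimeFactorial] using ModEq.refl 1
  | succ a ih =>
    rw [succ_mul, coprimeFactorial_mul_add_self hq1, pow_succ]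
    exact ih.mul (prod_coprimeResidues_mul_add_modEq hq a)

theorem choose_prime_mul_modEq {p : ℕ} (hp : p.Prime) (hp3 : 3 < p) {k N K : ℕ}
    (hN : p ^ k ∣ N) (hK : p ^ k ∣ K) :
    (p * N).choose (p * K) ≡ N.choose K [MOD p ^ (3 * (k + 1) + (N.choose K).factorization p)] := by
  obtain hNK | hKN := lt_or_ge N K
  · rw [choose_eq_zero_of_lt hNK, choose_eq_zero_of_lt (Nat.mul_lt_mul_left hp.pos |>.2 hNK)]
  obtain ⟨L, rfl⟩ := exists_add_of_le hKN
  have hL : p ^ k ∣ L := (Nat.dvd_add_right hK).1 hN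
  set q := p ^ (k + 1)
  set D := ∏ i ∈ coprimeResidues q, i
  have hp6 : p.Coprime 6 := Coprime.mul_right (n := 3)
    ((coprime_primes hp prime_two).2 (by omega)) ((coprime_primes hp prime_three).2 (by omega))
  have hF (M : ℕ) (hM : p ^ k ∣ M) :
      coprimeFactorial p (p * M) ≡ D ^ (M / p ^ k) [MOD q ^ 3] := by
    rw [← coprimeFactorial_pow p _ k.succ_ne_zero, ← Nat.div_mul_cancel hM,
      Nat.mul_div_cancel _ (by positivity), mul_left_comm, ← pow_succ']
    exact coprimeFactorial_mul_modEq (hp6.pow_left _) _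
  have hW : coprimeFactorial p (p * (K + L)) ≡
      coprimeFactorial p (p * K) * coprimeFactorial p (p * L) [MOD q ^ 3] := by
    calc _ ≡ D ^ ((K + L) / p ^ k) [MOD q ^ 3] := hF _ (dvd_add hK hL)
      _ = D ^ (K / p ^ k) * D ^ (L / p ^ k) := by rw [Nat.add_div_of_dvd_right hK, pow_add]
      _ ≡ _ [MOD q ^ 3] := ((hF K hK).mul (hF L hL)).symm
  have hcop : (q ^ 3 * p ^ ((K + L).choose K).factorization p).Coprime
      (coprimeFactorial p (p * K) * coprimeFactorial p (p * L)) := by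
    rw [← pow_mul, ← pow_add]
    exact (Coprime.mul_right (coprime_coprimeFactorial _ _)
      (coprime_coprimeFactorial _ _)).pow_left _
  rw [show 3 * (k + 1) = (k + 1) * 3 by ring, pow_add, pow_mul]
  refine ModEq.cancel_right_of_coprime hcop ?_
  rw [choose_mul_coprimeFactorial hp]
  exact ((hW.mul_left' _).of_dvd (by rw [mul_comm]; exact mul_dvd_mul_right (ordProj_dvd _ _) _))

end Nat

theorem summand_congruence_A_eq_two_general (p : ℕ) (hp : p.Prime) (hp3 : 3 < p)
    (B m n r s : ℕ) (hn : 1 ≤ n)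
    (hs : 1 ≤ s) (hsr : s ≤ r) (hle : n * p ^ s ≤ m * p ^ r) :
    (Nat.choose (m * p ^ r) (n * p ^ s)) ^ 2 * (Nat.choose (2 * (n * p ^ s)) (n * p ^ s)) ^ B ≡
      (Nat.choose (m * p ^ (r - 1)) (n * p ^ (s - 1))) ^ 2 *
        (Nat.choose (2 * (n * p ^ (s - 1))) (n * p ^ (s - 1))) ^ B [MOD p ^ (2 * r)] := by
  set N := m * p ^ (r - 1)
  set K := n * p ^ (s - 1)
  have hpN : m * p ^ r = p * N := by
    rw [mul_left_comm, ← pow_succ', Nat.sub_add_cancel (by omega)]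
  have hpK : n * p ^ s = p * K := by rw [mul_left_comm, ← pow_succ', Nat.sub_add_cancel hs]
  rw [hpN, hpK] at hle ⊢
  rw [mul_left_comm 2 p K]
  have hKN : K ≤ N := Nat.le_of_mul_le_mul_left hle hp.pos
  have hK0 : K ≠ 0 := by positivity
  have hrN : r - 1 ≤ N.factorization p :=
    (hp.pow_dvd_iff_le_factorization (by omega)).1 (dvd_mul_left _ _)
  have hvN := Nat.factorization_le_factorization_choose_add (p := p) hKN hK0
  have hX := Nat.choose_prime_mul_modEq hp hp3 (k := min (N.factorization p) (K.factorization p))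
    ((pow_dvd_pow p (min_le_left _ _)).trans (Nat.ordProj_dvd N p))
    ((pow_dvd_pow p (min_le_right _ _)).trans (Nat.ordProj_dvd K p))
  have hY := Nat.choose_prime_mul_modEq hp hp3 (k := K.factorization p)
    ((Nat.ordProj_dvd K p).mul_left 2) (Nat.ordProj_dvd K p)
  replace hX := Nat.modEq_iff_dvd.1 hX.symm
  replace hY := Nat.modEq_iff_dvd.1 hY.symm
  have hX' : (p : ℤ) ^ (N.choose K).factorization p ∣ (N.choose K : ℤ) := by
    exact_mod_cast Nat.ordProj_dvd _ p
  push_cast at hX hY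
  refine (Nat.modEq_iff_dvd.2 ?_).symm
  push_cast
  exact pow_dvd_sq_mul_pow_sub_sq_mul_pow B hX hX' hY le_add_self (by omega) (by omega)

theorem summand_congruence_A_eq_two (p : ℕ) (hp : p.Prime) (hp3 : 3 < p)
    (B m n r s : ℕ) (hB : 1 ≤ B) (hm : 1 ≤ m) (hn : 1 ≤ n)
    (hs : 1 ≤ s) (hsr : s ≤ r) (hle : n * p ^ s ≤ m * p ^ r) :
    (Nat.choose (m * p ^ r) (n * p ^ s)) ^ 2 * (Nat.choose (2 * (n * p ^ s)) (n * p ^ s)) ^ B ≡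
      (Nat.choose (m * p ^ (r - 1)) (n * p ^ (s - 1))) ^ 2 *
        (Nat.choose (2 * (n * p ^ (s - 1))) (n * p ^ (s - 1))) ^ B [MOD p ^ (2 * r)] :=
  summand_congruence_A_eq_two_general p hp hp3 B m n r s hn hs hsr hle
end
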